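/- arXiv:1401.0637 — 3 statements merged into one kernel-verified Lean document; each statement's English description precedes it below -/
import Mathlib

section
/- A semigroup S is a local group if and only if either S has no idempotents, or S has a minimal ideal J which is a completely simple semigroup and all idempotents of S belong to J. -/
/-- A semigroup `S` is a local group (for every idempotent `e`,
`eSe` is a group with identity `e`) if and only if either `S` has no idempotents,
or `S` has a minimal ideal `J` which is a completely simple semigroup (a simple
semigroup whose set of idempotents has a minimal element for the natural partial
order `e ≤ f ↔ ef = fe = e`) and all idempotents of `S` belong to `J`. -/
theorem localGroup_iff_no_idempotents_or_completely_simple_minimal_ideal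
    {S : Type*} [Semigroup S] :
    (∀ e : S, e * e = e →
      ∀ x : S, (∃ s : S, x = e * s * e) →
        (e * x = x ∧ x * e = x) ∧
        ∃ y : S, (∃ s : S, y = e * s * e) ∧ x * y = e ∧ y * x = e) ↔
    ((∀ e : S, e * e ≠ e) ∨
      ∃ J : Set S,
        -- `J` is an ideal of `S` …
        (J.Nonempty ∧ (∀ s : S, ∀ j ∈ J, s * j ∈ J ∧ j * s ∈ J)) ∧
        -- … which is minimal (contained in every ideal of `S`)
        (∀ K : Set S, K.Nonempty → (∀ s : S, ∀ j ∈ K, s * j ∈ K ∧ j * s ∈ K) →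
          J ⊆ K) ∧
        -- `J` is a completely simple semigroup:
        -- it is closed under multiplication,
        (∀ a ∈ J, ∀ b ∈ J, a * b ∈ J) ∧
        -- it is simple (its unique ideal is `J` itself),
        (∀ K : Set S, K ⊆ J → K.Nonempty →
          (∀ a ∈ J, ∀ k ∈ K, a * k ∈ K ∧ k * a ∈ K) → K = J) ∧
        -- and its idempotents have a minimal element for the order `≤`,
        (∃ e ∈ J, e * e = e ∧
          ∀ f ∈ J, f * f = f → f * e = f → e * f = f → f = e) ∧
        -- all idempotents of `S` lie in `J`
        (∀ e : S, e * e = e → e ∈ J)) := by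
  constructor
  · -- Forward direction
    intro hLG
    by_cases hE : ∀ e : S, e * e ≠ e
    · exact Or.inl hE
    push_neg at hE
    obtain ⟨e, he⟩ := hE
    right
    -- key: every idempotent lies in every (two-sided) ideal of S
    have key : ∀ f : S, f * f = f → ∀ K : Set S, K.Nonempty →
        (∀ s : S, ∀ j ∈ K, s * j ∈ K ∧ j * s ∈ K) → f ∈ K := by
      intro f hf K hKne hKid
      obtain ⟨k, hk⟩ := hKne
      have h1 : f * k ∈ K := (hKid f k hk).1
      have h2 : f * k * f ∈ K := (hKid f _ h1).2
      obtain ⟨-, y, -, hxy, -⟩ := hLG f hf (f * k * f) ⟨k, rfl⟩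
      have h3 : f * k * f * y ∈ K := (hKid y _ h2).2
      rwa [hxy] at h3
    refine ⟨{x | ∃ a b : S, x = a * e * b}, ⟨⟨e, e, e, by rw [he, he]⟩, ?_⟩,
      ?_, ?_, ?_, ⟨e, ⟨e, e, by rw [he, he]⟩, he, ?_⟩, ?_⟩
    · -- ideal
      rintro s j ⟨a, b, rfl⟩
      exact ⟨⟨s * a, b, by simp only [mul_assoc]⟩, ⟨a, b * s, by simp only [mul_assoc]⟩⟩
    · -- minimal ideal
      rintro K hKne hKid x ⟨a, b, rfl⟩
      have heK : e ∈ K := key e he K hKne hKid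
      have h1 : a * e ∈ K := (hKid a e heK).1
      exact (hKid b _ h1).2
    · -- closed under multiplication
      rintro x ⟨a, b, rfl⟩ y ⟨c, d, rfl⟩
      exact ⟨a, b * (c * e * d), by simp only [mul_assoc]⟩
    · -- simple
      intro K hsub hKne hKid
      obtain ⟨k, hk⟩ := hKne
      have heJ : e ∈ {x | ∃ a b : S, x = a * e * b} := ⟨e, e, by rw [he, he]⟩
      have h1 : e * k ∈ K := (hKid e heJ k hk).1
      have h2 : e * k * e ∈ K := (hKid e heJ _ h1).2
      obtain ⟨-, y, ⟨s, hy⟩, hxy, -⟩ := hLG e he (e * k * e) ⟨k, rfl⟩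
      have hyJ : y ∈ {x | ∃ a b : S, x = a * e * b} :=
        ⟨e, s * e, by rw [hy, he, mul_assoc]⟩
      have h3 : e * k * e * y ∈ K := (hKid y hyJ _ h2).2
      rw [hxy] at h3
      refine Set.Subset.antisymm hsub ?_
      rintro x ⟨a, b, rfl⟩
      have hae : a * e ∈ {x | ∃ a b : S, x = a * e * b} :=
        ⟨a, e, by rw [mul_assoc, he]⟩
      have heb : e * b ∈ {x | ∃ a b : S, x = a * e * b} := ⟨e, b, by rw [he]⟩
      have h4 : a * e * e ∈ K := (hKid (a * e) hae e h3).1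
      have h5 : a * e * e * (e * b) ∈ K := (hKid (e * b) heb _ h4).2
      have : a * e * e * (e * b) = a * e * b := by
        simp only [mul_assoc]
        rw [← mul_assoc e e, he, ← mul_assoc e e, he]
      rwa [this] at h5
    · -- e is a minimal idempotent
      intro f _ hf h1 h2
      obtain ⟨-, y, -, hxy, -⟩ := hLG e he f ⟨f, by rw [h2, h1]⟩
      calc f = f * e := h1.symm
        _ = f * (f * y) := by rw [hxy]
        _ = f * f * y := (mul_assoc _ _ _).symm
        _ = f * y := by rw [hf]
        _ = e := hxy
    · -- all idempotents in J
      intro f hf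
      refine key f hf _ ⟨e, e, e, by rw [he, he]⟩ ?_
      rintro s j ⟨a, b, rfl⟩
      exact ⟨⟨s * a, b, by simp only [mul_assoc]⟩, ⟨a, b * s, by simp only [mul_assoc]⟩⟩
  · -- Backward direction
    rintro (hnone | ⟨J, ⟨-, hJid⟩, -, hclosed, hsimple, ⟨e, heJ, hee, hprim⟩, hallidem⟩)
    · intro f hf
      exact absurd hf (hnone f)
    intro f hf x hxform
    -- sandwich lemma from simplicity
    have S1 : ∀ a ∈ J, ∀ b ∈ J, ∃ x ∈ J, ∃ y ∈ J, x * a * y = b := by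
      intro a ha b hb
      have hK := hsimple {z | ∃ x ∈ J, ∃ y ∈ J, z = x * a * y} ?_ ?_ ?_
      · rw [← hK] at hb
        obtain ⟨x, hx, y, hy, hz⟩ := hb
        exact ⟨x, hx, y, hy, hz.symm⟩
      · rintro z ⟨x, hx, y, hy, rfl⟩
        exact hclosed _ (hclosed x hx a ha) y hy
      · exact ⟨a * a * a, a, ha, a, ha, rfl⟩
      · rintro c hc z ⟨x, hx, y, hy, rfl⟩
        exact ⟨⟨c * x, hclosed c hc x hx, y, hy, by simp only [mul_assoc]⟩,
          ⟨x, hx, y * c, hclosed y hy c hc, by simp only [mul_assoc]⟩⟩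
    -- left division at e (uses primitivity)
    have S2 : ∀ a ∈ J, a * e = a → ∃ t ∈ J, t * a = e := by
      intro a ha hae
      obtain ⟨x, hxJ, y, hyJ, hxy⟩ := S1 a ha e heJ
      have hxyw : ∀ w : S, x * (a * (y * w)) = e * w := fun w => by
        rw [← mul_assoc, ← mul_assoc, hxy]
      have heW : ∀ w : S, e * (e * w) = e * w := fun w => by
        rw [← mul_assoc, hee]
      have haeW : ∀ w : S, a * (e * w) = a * w := fun w => by
        rw [← mul_assoc, hae]
      have hzJ : e * (y * (e * (x * a))) ∈ J :=
        hclosed e heJ _ (hclosed y hyJ _ (hclosed e heJ _ (hclosed x hxJ a ha)))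
      have hzz : (e * (y * (e * (x * a)))) * (e * (y * (e * (x * a)))) =
          e * (y * (e * (x * a))) := by
        simp only [mul_assoc, heW, haeW, hxyw]
      have hze : (e * (y * (e * (x * a)))) * e = e * (y * (e * (x * a))) := by
        simp only [mul_assoc, hae]
      have hez : e * (e * (y * (e * (x * a)))) = e * (y * (e * (x * a))) := heW _
      have hkey : e * (y * (e * (x * a))) = e := hprim _ hzJ hzz hze hez
      refine ⟨e * (y * (e * x)), hclosed e heJ _ (hclosed y hyJ _ (hclosed e heJ x hxJ)), ?_⟩
      calc (e * (y * (e * x))) * a = e * (y * (e * (x * a))) := by simp only [mul_assoc]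
        _ = e := hkey
    -- right division at e (mirror)
    have S2' : ∀ a ∈ J, e * a = a → ∃ t ∈ J, a * t = e := by
      intro a ha hea
      obtain ⟨x, hxJ, y, hyJ, hxy⟩ := S1 a ha e heJ
      have hwxy : ∀ w : S, w * x * a * y = w * e := fun w => by
        rw [mul_assoc w, mul_assoc w, hxy]
      have hweW : ∀ w : S, w * e * e = w * e := fun w => by
        rw [mul_assoc, hee]
      have hwea : ∀ w : S, w * e * a = w * a := fun w => by
        rw [mul_assoc, hea]
      have hzJ : a * y * e * x * e ∈ J :=
        hclosed _ (hclosed _ (hclosed _ (hclosed a ha y hyJ) e heJ) x hxJ) e heJ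
      have hzz : (a * y * e * x * e) * (a * y * e * x * e) = a * y * e * x * e := by
        simp only [← mul_assoc, hweW, hwea, hwxy]
      have hez : e * (a * y * e * x * e) = a * y * e * x * e := by
        simp only [← mul_assoc, hea]
      have hze : (a * y * e * x * e) * e = a * y * e * x * e := hweW _
      have hkey : a * y * e * x * e = e := hprim _ hzJ hzz hze hez
      refine ⟨y * e * x * e, hclosed _ (hclosed _ (hclosed y hyJ e heJ) x hxJ) e heJ, ?_⟩
      calc a * (y * e * x * e) = a * y * e * x * e := by simp only [mul_assoc]
        _ = e := hkey
    -- left division at any idempotent f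
    have S3 : ∀ f ∈ J, ∀ a ∈ J, a * f = a → ∃ t ∈ J, t * a = f := by
      intro f hfJ a ha haf
      obtain ⟨x, hxJ, y, hyJ, hxye⟩ := S1 e heJ f hfJ
      have hbJ : a * x * e ∈ J := hclosed _ (hclosed a ha x hxJ) e heJ
      have hbe : a * x * e * e = a * x * e := by rw [mul_assoc (a * x), hee]
      obtain ⟨t, htJ, htb⟩ := S2 (a * x * e) hbJ hbe
      have h1 : a = a * x * e * y := by
        calc a = a * f := haf.symm
          _ = a * (x * e * y) := by rw [hxye]
          _ = a * x * e * y := by simp only [mul_assoc]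
      refine ⟨x * t, hclosed x hxJ t htJ, ?_⟩
      calc x * t * a = x * (t * a) := mul_assoc _ _ _
        _ = x * (t * (a * x * e * y)) := by rw [← h1]
        _ = x * (t * (a * x * e) * y) := by rw [← mul_assoc t]
        _ = x * (e * y) := by rw [htb]
        _ = x * e * y := (mul_assoc _ _ _).symm
        _ = f := hxye
    -- right division at any idempotent f
    have S3' : ∀ f ∈ J, ∀ a ∈ J, f * a = a → ∃ t ∈ J, a * t = f := by
      intro f hfJ a ha hfa
      obtain ⟨x, hxJ, y, hyJ, hxye⟩ := S1 e heJ f hfJ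
      have hbJ : e * (y * a) ∈ J := hclosed e heJ _ (hclosed y hyJ a ha)
      have heb : e * (e * (y * a)) = e * (y * a) := by rw [← mul_assoc, hee]
      obtain ⟨t, htJ, hbt⟩ := S2' (e * (y * a)) hbJ heb
      have h1 : a = x * (e * (y * a)) := by
        calc a = f * a := hfa.symm
          _ = x * e * y * a := by rw [hxye]
          _ = x * (e * (y * a)) := by simp only [mul_assoc]
      refine ⟨t * y, hclosed t htJ y hyJ, ?_⟩
      calc a * (t * y) = x * (e * (y * a)) * (t * y) := by rw [← h1]
        _ = x * (e * (y * a) * t * y) := by simp only [mul_assoc]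
        _ = x * (e * y) := by rw [hbt]
        _ = x * e * y := by rw [← mul_assoc]
        _ = f := hxye
    -- now assemble
    obtain ⟨s, rfl⟩ := hxform
    have hfJ : f ∈ J := hallidem f hf
    have hfx : f * (f * s * f) = f * s * f := by
      rw [← mul_assoc, ← mul_assoc, hf]
    have hxf : (f * s * f) * f = f * s * f := by
      rw [mul_assoc, hf]
    have hxJ : f * s * f ∈ J := (hJid f _ (hJid s f hfJ).2).2
    obtain ⟨t, htJ, htx⟩ := S3 f hfJ (f * s * f) hxJ hxf
    obtain ⟨u, huJ, hxu⟩ := S3' f hfJ (f * s * f) hxJ hfx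
    have ht'x : (f * t * f) * (f * s * f) = f := by
      calc (f * t * f) * (f * s * f) = f * t * (f * (f * s * f)) := by
            simp only [mul_assoc]
        _ = f * t * (f * s * f) := by rw [hfx]
        _ = f * (t * (f * s * f)) := mul_assoc _ _ _
        _ = f * f := by rw [htx]
        _ = f := hf
    have hxu' : (f * s * f) * (f * u * f) = f := by
      calc (f * s * f) * (f * u * f) = (f * s * f) * f * u * f := by
            simp only [mul_assoc]
        _ = (f * s * f) * u * f := by rw [hxf]
        _ = f * f := by rw [hxu]
        _ = f := hf
    have htu : f * t * f = f * u * f := by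
      calc f * t * f = f * (t * f) := mul_assoc _ _ _
        _ = (f * t * f) * f := by simp only [mul_assoc, hf]
        _ = (f * t * f) * ((f * s * f) * (f * u * f)) := by rw [hxu']
        _ = ((f * t * f) * (f * s * f)) * (f * u * f) := (mul_assoc _ _ _).symm
        _ = f * (f * u * f) := by rw [ht'x]
        _ = f * u * f := by rw [← mul_assoc, ← mul_assoc, hf]
    exact ⟨⟨hfx, hxf⟩, f * t * f, ⟨t, rfl⟩, by rw [htu]; exact hxu', ht'x⟩
end

section
/- For all words w, z ∈ A⁺, sc_L[w] = sc_L[z] if and only if w = z; i.e., the map assigning to each non-empty word its sequence of coordinates determined by L is injective. -/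
/-!
The factors in `L̈` form an antichain for the factor order: a proper factor of `v ∈ L̈` is a
factor of `v_α` or of `v_ω`, hence lies in `L`. So two occurrences of `L̈`-factors chosen in the
same word either coincide or overlap with one starting and ending strictly before the other.
In the overlapping case both recursive decompositions refine a common one, obtained by cutting
at both occurrences, and induction on the length of the word shows that every derivation of the
sequence of coordinates yields the same result.

Conversely the word is recovered from its coordinates: `w_i` begins with `(ẅ_i)_ω`, because
the first coordinate of a word contains every prefix of the word lying in `L`; so gluing the
coordinates along these overlaps gives back the word.
-/

open List

variable {A : Type*} {G : Type*} {A_G : Type*}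

/-- `L̈`: the words not in `L` whose maximal proper prefix and suffix are in `L`. -/
def Ddot (L : Set (List A)) : Set (List A) :=
  {v | v ∉ L ∧ v.dropLast ∈ L ∧ v.tail ∈ L}

/-- `IsSc L w s` : `s` is the sequence of coordinates of `w` determined by `L`,
via the recursive construction of the paper: if `w ∈ L` then `s = (w)`; otherwise
select an occurrence `w = w' v w''` of a factor `v ∈ L̈` and put
`s = sc_L[w' v_α] (v) sc_L[v_ω w'']`. -/
inductive IsSc (L : Set (List A)) : List A → List (List A) → Prop
  | base (w : List A) (hw : w ∈ L) : IsSc L w [w]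
  | step (w' w'' v : List A) (s₁ s₂ : List (List A)) (hv : v ∈ Ddot L)
      (h₁ : IsSc L (w' ++ v.dropLast) s₁) (h₂ : IsSc L (v.tail ++ w'') s₂) :
      IsSc L (w' ++ v ++ w'') (s₁ ++ v :: s₂)

open Classical in
/-- `sc_L[w]`, the sequence of coordinates of `w` determined by `L`. -/
noncomputable def scL (L : Set (List A)) (w : List A) : List (List A) :=
  if h : ∃ s, IsSc L w s then h.choose else []

namespace List

variable {α : Type*}

theorem infix_of_append_eq_append {w' v w'' x' u x'' : List α}
    (h : w' ++ v ++ w'' = x' ++ u ++ x'') (h₁ : x'.length ≤ w'.length)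
    (h₂ : (w' ++ v).length ≤ (x' ++ u).length) : v <:+: u := by
  obtain ⟨a, rfl⟩ : x' <+: w' :=
    prefix_of_prefix_length_le (l₃ := w' ++ v ++ w'')
      (by rw [h]; exact (prefix_append _ _).trans (prefix_append _ _))
      ((prefix_append _ _).trans (prefix_append _ _)) h₁
  have h' : a ++ v ++ w'' = u ++ x'' := by simpa using h
  obtain ⟨b, hb⟩ : a ++ v <+: u :=
    prefix_of_prefix_length_le ⟨w'', h'⟩ (prefix_append u x'') (by simpa using h₂)
  exact ⟨a, b, hb⟩

/-- `p ++ u.dropLast = v.tail ++ q` is the factor running from the second letter of `v` to the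
penultimate letter of `u`. -/
theorem exists_overlap_of_append_eq_append {w' v w'' x' u x'' : List α}
    (h : w' ++ v ++ w'' = x' ++ u ++ x'') (hv : v ≠ []) (h₁ : w'.length < x'.length)
    (h₂ : (w' ++ v).length < (x' ++ u).length) :
    ∃ p q, v.tail ++ w'' = p ++ u ++ x'' ∧ x' ++ u.dropLast = w' ++ v ++ q ∧
      p ++ u.dropLast = v.tail ++ q := by
  obtain ⟨g, rfl⟩ : w' <+: x' :=
    prefix_of_prefix_length_le ((prefix_append _ _).trans (prefix_append _ _))
      (by rw [h]; exact (prefix_append _ _).trans (prefix_append _ _)) h₁.le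
  have hg : g ≠ [] := ne_nil_of_length_pos (by simp at h₁; omega)
  have h' : v ++ w'' = g ++ u ++ x'' := by simpa using h
  obtain ⟨q, hq⟩ : v <+: g ++ u.dropLast := by
    refine prefix_of_prefix_length_le ⟨w'', h'⟩
      (((prefix_append_right_inj g).2 (dropLast_prefix u)).trans (prefix_append _ _)) ?_
    simp at h₂ ⊢
    omega
  refine ⟨g.tail, q, ?_, by simp [hq], ?_⟩
  · simpa [tail_append_of_ne_nil hv, tail_append_of_ne_nil hg] using congrArg tail h'
  · simpa [tail_append_of_ne_nil hv, tail_append_of_ne_nil hg] using (congrArg tail hq).symm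

end List

def IsFactorial (L : Set (List A)) : Prop :=
  ∀ u w : List A, w ∈ L → u ≠ [] → u <:+: w → u ∈ L

section Coordinates

variable {L : Set (List A)}

theorem two_le_length_of_notMem (hA : ∀ a : A, [a] ∈ L) {w : List A} (hw : w ∉ L)
    (hne : w ≠ []) : 2 ≤ w.length := by
  match w with
  | [a] => exact absurd (hA a) hw
  | _ :: _ :: _ => simp

namespace Ddot

theorem ne_nil {v : List A} (hv : v ∈ Ddot L) : v ≠ [] := by
  rintro rfl
  exact hv.1 hv.2.1

theorem two_le_length (hA : ∀ a : A, [a] ∈ L) {v : List A} (hv : v ∈ Ddot L) :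
    2 ≤ v.length :=
  two_le_length_of_notMem hA hv.1 (ne_nil hv)

theorem not_infix (hL : IsFactorial L) {v w : List A} (hv : v ∈ Ddot L) (hw : w ∈ L) :
    ¬ v <:+: w :=
  fun h => hv.1 (hL v w hw (ne_nil hv) h)

theorem eq_of_infix (hL : IsFactorial L) {u v : List A} (hv : v ∈ Ddot L) (hu : u ∈ Ddot L)
    (h : v <:+: u) : v = u := by
  obtain ⟨a, b, rfl⟩ := h
  by_cases hb : b = []
  · subst hb
    by_cases ha : a = []
    · simp [ha]
    · refine absurd ⟨a.tail, [], ?_⟩ (not_infix hL hv hu.2.2)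
      simp [tail_append_of_ne_nil ha]
  · refine absurd ⟨a, b.dropLast, ?_⟩ (not_infix hL hv hu.2.1)
    simp [hb]

end Ddot

theorem exists_mem_Ddot_infix (hA : ∀ a : A, [a] ∈ L) {w : List A} (hw : w ∉ L)
    (hne : w ≠ []) : ∃ v ∈ Ddot L, v <:+: w := by
  induction h : w.length using Nat.strong_induction_on generalizing w with
  | _ n IH =>
  have h2 := two_le_length_of_notMem hA hw hne
  by_cases hd : w.dropLast ∈ L
  · by_cases ht : w.tail ∈ L
    · exact ⟨w, ⟨hw, hd, ht⟩, infix_refl w⟩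
    · obtain ⟨v, hv, hvw⟩ := IH _ (by simp; omega) ht
        (ne_nil_of_length_pos (by simp; omega)) rfl
      exact ⟨v, hv, hvw.trans (tail_suffix w).isInfix⟩
  · obtain ⟨v, hv, hvw⟩ := IH _ (by simp; omega) hd
      (ne_nil_of_length_pos (by simp; omega)) rfl
    exact ⟨v, hv, hvw.trans (dropLast_prefix w).isInfix⟩

theorem exists_isSc (hA : ∀ a : A, [a] ∈ L) {w : List A} (hne : w ≠ []) :
    ∃ s, IsSc L w s := by
  induction h : w.length using Nat.strong_induction_on generalizing w with
  | _ n IH =>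
  by_cases hw : w ∈ L
  · exact ⟨[w], .base w hw⟩
  obtain ⟨v, hv, w', w'', rfl⟩ := exists_mem_Ddot_infix hA hw hne
  have h2 := Ddot.two_le_length hA hv
  obtain ⟨s₁, hs₁⟩ := IH (w' ++ v.dropLast).length (by simp at h ⊢; omega)
    (ne_nil_of_length_pos (by simp; omega)) rfl
  obtain ⟨s₂, hs₂⟩ := IH (v.tail ++ w'').length (by simp at h ⊢; omega)
    (ne_nil_of_length_pos (by simp; omega)) rfl
  exact ⟨_, .step w' w'' v s₁ s₂ hv hs₁ hs₂⟩

theorem IsSc.step_eq_step_of_overlap (hA : ∀ a : A, [a] ∈ L)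
    {w' w'' v x' x'' u p q : List A} {s₁ s₂ t₁ t₂ : List (List A)}
    (hv : v ∈ Ddot L) (hu : u ∈ Ddot L)
    (h₁ : IsSc L (w' ++ v.dropLast) s₁) (k₂ : IsSc L (u.tail ++ x'') t₂)
    (hp : v.tail ++ w'' = p ++ u ++ x'') (hq : x' ++ u.dropLast = w' ++ v ++ q)
    (hpq : p ++ u.dropLast = v.tail ++ q)
    (hs₂ : ∀ s, IsSc L (v.tail ++ w'') s → s = s₂)
    (ht₁ : ∀ t, IsSc L (x' ++ u.dropLast) t → t = t₁) :
    s₁ ++ v :: s₂ = t₁ ++ u :: t₂ := by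
  obtain ⟨r, hr⟩ := exists_isSc hA (w := p ++ u.dropLast)
    (ne_nil_of_length_pos (by simp; have := Ddot.two_le_length hA hu; omega))
  have hs₂r : r ++ u :: t₂ = s₂ := hs₂ _ (hp ▸ .step p x'' u r t₂ hu hr k₂)
  have ht₁r : s₁ ++ v :: r = t₁ := ht₁ _ (hq ▸ .step w' q v s₁ r hv h₁ (hpq ▸ hr))
  simp [← hs₂r, ← ht₁r]

theorem IsSc.step_eq_step_of_length_le (hL : IsFactorial L) (hA : ∀ a : A, [a] ∈ L)
    {w' w'' v x' x'' u : List A} {s₁ s₂ t₁ t₂ : List (List A)}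
    (hv : v ∈ Ddot L) (hu : u ∈ Ddot L)
    (h₁ : IsSc L (w' ++ v.dropLast) s₁) (h₂ : IsSc L (v.tail ++ w'') s₂)
    (k₁ : IsSc L (x' ++ u.dropLast) t₁) (k₂ : IsSc L (u.tail ++ x'') t₂)
    (h : w' ++ v ++ w'' = x' ++ u ++ x'') (hle : w'.length ≤ x'.length)
    (IH : ∀ y : List A, y.length < (w' ++ v ++ w'').length →
      ∀ s t, IsSc L y s → IsSc L y t → s = t) :
    s₁ ++ v :: s₂ = t₁ ++ u :: t₂ := by
  have hlen := congrArg length h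
  have hv2 := Ddot.two_le_length hA hv
  have hu2 := Ddot.two_le_length hA hu
  simp only [length_append] at hlen
  by_cases hin : (x' ++ u).length ≤ (w' ++ v).length
  · obtain rfl : u = v := Ddot.eq_of_infix hL hu hv (infix_of_append_eq_append h.symm hle hin)
    have h' : w' ++ (u ++ w'') = x' ++ (u ++ x'') := by simpa using h
    obtain ⟨rfl, h''⟩ := append_inj h' (by simp at hin; omega)
    obtain rfl := append_cancel_left h''
    rw [IH _ (by simp; omega) _ _ h₁ k₁, IH _ (by simp; omega) _ _ h₂ k₂]
  · have hlt : w'.length < x'.length := by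
      by_contra hge
      obtain rfl : v = u := Ddot.eq_of_infix hL hv hu
        (infix_of_append_eq_append h (by omega) (by simp at hin ⊢; omega))
      simp at hin
      omega
    obtain ⟨p, q, hp, hq, hpq⟩ :=
      exists_overlap_of_append_eq_append h (Ddot.ne_nil hv) hlt (by omega)
    exact step_eq_step_of_overlap hA hv hu h₁ k₂ hp hq hpq
      (fun s hs => IH _ (by simp; omega) _ _ hs h₂)
      (fun t ht => IH _ (by simp; omega) _ _ ht k₁)

theorem IsSc.unique (hL : IsFactorial L) (hA : ∀ a : A, [a] ∈ L) {w : List A}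
    {s t : List (List A)} (hs : IsSc L w s) (ht : IsSc L w t) : s = t := by
  induction hn : w.length using Nat.strong_induction_on generalizing w s t with
  | _ n IH =>
  generalize hz : w = z at ht
  cases hs with
  | base _ hw =>
    cases ht with
    | base => rw [hz]
    | step x' x'' u _ _ hu => exact absurd (hz ▸ infix_append x' u x'') (Ddot.not_infix hL hu hw)
  | step w' w'' v s₁ s₂ hv h₁ h₂ =>
    cases ht with
    | base _ hw => exact absurd (hz ▸ infix_append w' v w'') (Ddot.not_infix hL hv hw)
    | step x' x'' u t₁ t₂ hu k₁ k₂ =>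
      have IH' : ∀ y : List A, y.length < (w' ++ v ++ w'').length →
          ∀ s t, IsSc L y s → IsSc L y t → s = t :=
        fun y hy _ _ hs ht => IH _ (hn ▸ hy) hs ht rfl
      rcases le_total w'.length x'.length with hle | hle
      · exact step_eq_step_of_length_le hL hA hv hu h₁ h₂ k₁ k₂ hz hle IH'
      · exact (step_eq_step_of_length_le hL hA hu hv k₁ k₂ h₁ h₂ hz.symm hle
          (hz ▸ IH')).symm

def glueTail : List (List A) → List A
  | [] => []
  | [_] => []
  | v :: u :: r => v.getLast?.toList ++ u.drop (v.length - 1) ++ glueTail r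

def glue : List (List A) → List A
  | [] => []
  | u :: r => u ++ glueTail r

theorem glueTail_append : ∀ {x : List (List A)} (y : List (List A)), Even x.length →
    glueTail (x ++ y) = glueTail x ++ glueTail y
  | [], _, _ => rfl
  | [_], _, hx => absurd hx (by simp)
  | _ :: _ :: x, y, hx => by
    simp [glueTail, glueTail_append (x := x) y (by simpa [parity_simps] using hx)]

theorem glue_append {x : List (List A)} (y : List (List A)) (hx : Odd x.length) :
    glue (x ++ y) = glue x ++ glueTail y := by
  obtain _ | ⟨u, r⟩ := x
  · simp at hx
  · simp [glue, glueTail_append y (by simpa [parity_simps] using hx)]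

theorem IsSc.odd_length {w : List A} {s : List (List A)} (h : IsSc L w s) : Odd s.length := by
  induction h with
  | base => simp
  | step _ _ _ _ _ _ _ _ ih₁ ih₂ => simp [ih₁, ih₂, parity_simps]

theorem IsSc.exists_eq_cons_prefix (hL : IsFactorial L) {w p : List A} {s : List (List A)}
    (h : IsSc L w s) (hp : p <+: w) (hpL : p ∈ L) : ∃ u r, s = u :: r ∧ p <+: u := by
  induction h with
  | base w => exact ⟨w, [], rfl, hp⟩
  | step w' w'' v s₁ s₂ hv _ _ ih₁ =>
    have hpre : p <+: w' ++ v.dropLast := by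
      refine prefix_of_prefix_length_le hp
        (((prefix_append_right_inj w').2 (dropLast_prefix v)).trans (prefix_append _ _)) ?_
      by_contra hlong
      have hwv : w' ++ v <+: p :=
        prefix_of_prefix_length_le (prefix_append _ _) hp (by simp at hlong ⊢; omega)
      exact Ddot.not_infix hL hv hpL ((infix_append w' v []).trans (by simpa using hwv.isInfix))
    obtain ⟨u, r, rfl, hpu⟩ := ih₁ hpre
    exact ⟨u, r ++ v :: s₂, rfl, hpu⟩

theorem IsSc.glue_eq (hL : IsFactorial L) {w : List A} {s : List (List A)} (h : IsSc L w s) :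
    glue s = w := by
  induction h with
  | base => simp [glue, glueTail]
  | step w' w'' v s₁ s₂ hv h₁ h₂ ih₁ ih₂ =>
    obtain ⟨_, r, rfl, m, rfl⟩ := h₂.exists_eq_cons_prefix hL (prefix_append _ _) hv.2.2
    have hm : m ++ glueTail r = w'' := by simpa [glue] using ih₂
    have hdrop : (v.tail ++ m).drop (v.length - 1) = m := drop_left' (by simp)
    rw [glue_append _ h₁.odd_length, ih₁, glueTail, hdrop, ← hm, dropLast_eq_take]
    simp only [append_assoc, ← append_assoc (take _ v), take_append_getLast?]

end Coordinates

theorem scL_injective_general (L : Set (List A))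
    (hFac : ∀ u w : List A, w ∈ L → u ≠ [] → u <:+: w → u ∈ L)
    (hA : ∀ a : A, [a] ∈ L)
    (w z : List A)
    (s t : List (List A)) (hs : IsSc L w s) (ht : IsSc L z t) :
    s = t ↔ w = z := by
  constructor
  · rintro rfl
    rw [← hs.glue_eq hFac, ← ht.glue_eq hFac]
  · rintro rfl
    exact hs.unique hFac hA ht

/-- For all words `w, z ∈ A⁺`, `sc_L[w] = sc_L[z]` if and only
if `w = z`: the map assigning to each non-empty word its sequence of coordinates
determined by `L` is injective. -/
theorem scL_injective [Nonempty A] (L : Set (List A))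
    (hE : [] ∉ L)
    (hFac : ∀ u w : List A, w ∈ L → u ≠ [] → u <:+: w → u ∈ L)
    (hA : ∀ a : A, [a] ∈ L)
    (w z : List A) (hw : w ≠ []) (hz : z ≠ [])
    (s t : List (List A)) (hs : IsSc L w s) (ht : IsSc L z t) :
    s = t ↔ w = z :=
  scL_injective_general L hFac hA w z s t hs ht
end

section
/- For all w, z ∈ X⁺ (words over X = A ∪ A_G), f̌(wz) = f̌(f̌(w) f̌(z)), where f̌ is extended to X⁺ as described; in particular f̌ ∘ f̌ = f̌. -/
open List

variable {A : Type*} {G : Type*} {A_G : Type*}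

section CoreG
variable [Group G]

/-- Evaluation of a word over `A_G` in the group `G`. -/
def evalW (evA : A_G → G) (u : List A_G) : G := (u.map evA).prod

/-- `f̂ : A* → G`. -/
noncomputable def fhat (L : Set (List A)) (f : List A → G) (w : List A) : G :=
  ((scL L w).map f).prod

/-- first coordinate (word part of `f̀`). -/
noncomputable def graveWord (L : Set (List A)) (w : List A) : List A :=
  (scL L w).headI

/-- group part of `f̀`. -/
noncomputable def graveG (L : Set (List A)) (f : List A → G) (w : List A) : G :=
  ((scL L w).tail.map f).prod

/-- last coordinate (word part of `f́`). -/
noncomputable def acuteWord (L : Set (List A)) (w : List A) : List A :=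
  (scL L w).getLastD []

/-- group part of `f́`. -/
noncomputable def acuteG (L : Set (List A)) (f : List A → G) (w : List A) : G :=
  ((scL L w).dropLast.map f).prod

/-- The word over `X = A ⊕ A_G` determined by a coordinate sequence:
`w₀ f(ẅ₁)f(w₁)⋯f(ẅ_m) w_m`, the middle group element written as its
chosen representative word over `A_G`. -/
def checkOfSeq (f : List A → G) (rep : G → List A_G) :
    List (List A) → List (A ⊕ A_G)
  | [] => []
  | [w] => w.map Sum.inl
  | w :: rest =>
      w.map Sum.inl ++ (rep ((rest.dropLast.map f).prod)).map Sum.inr ++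
        (rest.getLastD []).map Sum.inl

/-- longest prefix of `A`-letters. -/
def takeA : List (A ⊕ A_G) → List A
  | Sum.inl a :: r => a :: takeA r
  | _ => []

def dropA : List (A ⊕ A_G) → List (A ⊕ A_G)
  | Sum.inl _ :: r => dropA r
  | w => w

/-- longest prefix of `A_G`-letters. -/
def takeG : List (A ⊕ A_G) → List A_G
  | Sum.inr b :: r => b :: takeG r
  | _ => []

def dropG : List (A ⊕ A_G) → List (A ⊕ A_G)
  | Sum.inr _ :: r => dropG r
  | w => w

/-- Processing of the part `g₁u₁g₂u₂⋯g_nu_n` of a mixed word: returns the group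
element `eval(g₁)·f̂(u₁)·…·eval(g_n)·(acute part of u_n)` together with the final
word coordinate of `u_n`.  (Fuel-based recursion.) -/
noncomputable def midRunAux (L : Set (List A)) (f : List A → G) (evA : A_G → G) :
    ℕ → List (A ⊕ A_G) → G × List A
  | 0, _ => (1, [])
  | n + 1, w =>
      match dropA (dropG w) with
      | [] => (evalW evA (takeG w) * acuteG L f (takeA (dropG w)),
               acuteWord L (takeA (dropG w)))
      | r' => (evalW evA (takeG w) * fhat L f (takeA (dropG w)) *
                 (midRunAux L f evA n r').1,
               (midRunAux L f evA n r').2)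

/-- The extension `f̌ : X⁺ → Z ⊆ X⁺` of `f̌` to mixed words
(`f̌(u₀g₁u₁⋯g_nu_n) = f̀(u₀) g₁ f̂(u₁) ⋯ g_n f́(u_n)`, the middle group
element written as its representative word). -/
noncomputable def fcheckX (L : Set (List A)) (f : List A → G) (evA : A_G → G)
    (rep : G → List A_G) (w : List (A ⊕ A_G)) : List (A ⊕ A_G) :=
  match dropA w with
  | [] => checkOfSeq f rep (scL L (takeA w))
  | r =>
      (graveWord L (takeA w)).map Sum.inl ++
        (rep (graveG L f (takeA w) * (midRunAux L f evA r.length r).1)).map Sum.inr ++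
        (midRunAux L f evA r.length r).2.map Sum.inl

end CoreG


/-!
Send a word over `X = A ⊕ A_G` to its *profile*: the word itself if it lies in `A*`, and
otherwise the triple `(p, g, q)` of its first `A`-block, its last `A`-block and the group
element collecting everything in between, the inner `A`-blocks entering through `f̂`.
Concatenation becomes an associative product of profiles, and
`f̌ = toWord ∘ normalize ∘ ofWord`, where `normalize` replaces the outer blocks by their outer
coordinates. As representatives are non-empty words evaluating to their element,
`ofWord ∘ toWord = id`, so the theorem reduces to
`normalize (s * t) = normalize (normalize s * normalize t)`, idempotence being the case `t = 1`.
This identity comes from gluing: `sc_L[u v]` is `sc_L[u]` with its last coordinate `w_m`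
replaced by `sc_L[w_m v]`, and symmetrically with the first coordinate of `v`. Gluing holds
because `sc_L` is unique, and `sc_L` is unique because occurrences of factors in `L̈` are never
nested.
-/

theorem List.headI_append_of_ne_nil {α : Type*} [Inhabited α] {l : List α} (l' : List α)
    (h : l ≠ []) : (l ++ l').headI = l.headI := by
  cases l with
  | nil => exact absurd rfl h
  | cons a t => rfl

theorem List.getLastD_append_of_ne_nil {α : Type*} (l : List α) {l' : List α} (h : l' ≠ [])
    (d : α) : (l ++ l').getLastD d = l'.getLastD d := by
  simp [getLast?_eq_some_getLast h]

theorem List.getLastD_cons_of_ne_nil {α : Type*} {l : List α} (h : l ≠ []) (a d : α) :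
    (a :: l).getLastD d = l.getLastD d := by
  rw [getLastD_cons]; simp [getLast?_eq_some_getLast h]

theorem List.getLastD_tail {α : Type*} {l : List α} (h : l.tail ≠ []) (d : α) :
    l.tail.getLastD d = l.getLastD d := by
  cases l with
  | nil => exact absurd rfl h
  | cons a t => exact (getLastD_cons_of_ne_nil h a d).symm

theorem List.dropLast_ne_nil_of_tail_ne_nil {α : Type*} {l : List α} (h : l.tail ≠ []) :
    l.dropLast ≠ [] := by
  cases l with
  | nil => exact absurd rfl h
  | cons a t => simp [dropLast_cons_of_ne_nil (by simpa using h)]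

theorem List.headI_dropLast {α : Type*} [Inhabited α] {l : List α} (h : l.tail ≠ []) :
    l.dropLast.headI = l.headI := by
  cases l with
  | nil => exact absurd rfl h
  | cons a t => simp [dropLast_cons_of_ne_nil (by simpa using h)]

section Coordinates

variable {L : Set (List A)}

theorem Ddot.ne_nil_s7 (hE : [] ∉ L) {v : List A} (hv : v ∈ Ddot L) : v ≠ [] := by
  rintro rfl; exact hE hv.2.1

theorem IsSc.ne_nil_s7 {w : List A} {s : List (List A)} (h : IsSc L w s) : s ≠ [] := by
  cases h <;> simp

theorem IsSc.tail_ne_nil {w : List A} {s : List (List A)} (h : IsSc L w s) (hw : w ∉ L) :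
    s.tail ≠ [] := by
  cases h with
  | base => contradiction
  | step _ _ _ _ _ _ h₁ => simp [tail_append_of_ne_nil h₁.ne_nil_s7]

theorem IsSc.headI_mem {w : List A} {s : List (List A)} (h : IsSc L w s) : s.headI ∈ L := by
  induction h with
  | base _ hw => exact hw
  | step _ _ _ _ _ _ h₁ _ ih₁ => rwa [headI_append_of_ne_nil _ h₁.ne_nil_s7]

theorem IsSc.getLastD_mem {w : List A} {s : List (List A)} (h : IsSc L w s) :
    s.getLastD [] ∈ L := by
  induction h with
  | base _ hw => exact hw
  | step _ _ v _ s₂ _ _ h₂ _ ih₂ =>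
    rwa [getLastD_append_of_ne_nil _ (cons_ne_nil v s₂), getLastD_cons_of_ne_nil h₂.ne_nil_s7]

theorem IsSc.word_ne_nil (hE : [] ∉ L) {w : List A} {s : List (List A)} (h : IsSc L w s) :
    w ≠ [] := by
  induction h with
  | base _ hw => rintro rfl; exact hE hw
  | step _ _ _ _ _ hv => simp [Ddot.ne_nil_s7 hE hv]

theorem IsSc.append_right {v : List A} {t : List (List A)} (h : IsSc L v t) {u : List A}
    {r : List (List A)} (hr : IsSc L (u ++ t.headI) r) : IsSc L (u ++ v) (r ++ t.tail) := by
  induction h generalizing u r with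
  | base => simpa using hr
  | step w' w'' x s₁ s₂ hx h₁ h₂ ih₁ _ =>
    rw [headI_append_of_ne_nil _ h₁.ne_nil_s7] at hr
    have := IsSc.step (u ++ w') w'' x _ s₂ hx (by simpa using ih₁ hr) h₂
    rw [tail_append_of_ne_nil h₁.ne_nil_s7]
    simpa using this

theorem IsSc.append_left {u : List A} {s : List (List A)} (h : IsSc L u s) {v : List A}
    {r : List (List A)} (hr : IsSc L (s.getLastD [] ++ v) r) :
    IsSc L (u ++ v) (s.dropLast ++ r) := by
  induction h generalizing v r with
  | base => simpa using hr
  | step w' w'' x s₁ s₂ hx h₁ h₂ _ ih₂ =>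
    rw [getLastD_append_of_ne_nil _ (cons_ne_nil x s₂), getLastD_cons_of_ne_nil h₂.ne_nil_s7] at hr
    have := IsSc.step w' (w'' ++ v) x s₁ _ hx h₁ (by simpa using ih₂ hr)
    rw [dropLast_append_of_ne_nil (cons_ne_nil x s₂), dropLast_cons_of_ne_nil h₂.ne_nil_s7]
    simpa using this

theorem exists_mem_ddot_infix (hA : ∀ a : A, [a] ∈ L) {w : List A} (hw : w ≠ [])
    (hwL : w ∉ L) : ∃ v ∈ Ddot L, v <:+: w := by
  induction hn : w.length using Nat.strong_induction_on generalizing w with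
  | _ n ih =>
  have hlen : 2 ≤ w.length := by
    rcases w with _ | ⟨a, _ | ⟨b, t⟩⟩
    exacts [absurd rfl hw, absurd (hA a) hwL, by simp]
  by_cases hd : w.dropLast ∈ L
  · by_cases ht : w.tail ∈ L
    · exact ⟨w, ⟨hwL, hd, ht⟩, infix_rfl⟩
    · obtain ⟨v, hv, hvw⟩ :=
        ih _ (by simp; omega) (ne_nil_of_length_pos (by simp; omega)) ht rfl
      exact ⟨v, hv, hvw.trans (tail_suffix w).isInfix⟩
  · obtain ⟨v, hv, hvw⟩ := ih _ (by simp; omega) (ne_nil_of_length_pos (by simp; omega)) hd rfl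
    exact ⟨v, hv, hvw.trans (dropLast_prefix w).isInfix⟩

theorem IsSc.exists (hE : [] ∉ L) (hA : ∀ a : A, [a] ∈ L) {w : List A} (hw : w ≠ []) :
    ∃ s, IsSc L w s := by
  induction hn : w.length using Nat.strong_induction_on generalizing w with
  | _ n ih =>
  by_cases hwL : w ∈ L
  · exact ⟨_, .base w hwL⟩
  obtain ⟨v, hv, w', w'', rfl⟩ := exists_mem_ddot_infix hA hw hwL
  have hvd : v.dropLast ≠ [] := fun h => hE (h ▸ hv.2.1)
  have hvt : v.tail ≠ [] := fun h => hE (h ▸ hv.2.2)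
  have hv1 : 1 ≤ v.length := length_pos_iff.mpr (Ddot.ne_nil_s7 hE hv)
  subst hn
  obtain ⟨s₁, h₁⟩ := ih _ (by simp; omega) (w := w' ++ v.dropLast) (by simp [hvd]) rfl
  obtain ⟨s₂, h₂⟩ := ih _ (by simp; omega) (w := v.tail ++ w'') (by simp [hvt]) rfl
  exact ⟨_, .step w' w'' v s₁ s₂ hv h₁ h₂⟩

end Coordinates

section Uniqueness

variable {L : Set (List A)} (hE : [] ∉ L)
  (hFac : ∀ u w : List A, w ∈ L → u ≠ [] → u <:+: w → u ∈ L)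
include hE hFac

theorem Ddot.eq_nil_of_append_mem {x e : List A} (hx : x ∈ Ddot L) (hxe : x ++ e ∈ Ddot L) :
    e = [] := by
  by_contra he
  refine hx.1 (hFac x _ hxe.2.1 (Ddot.ne_nil_s7 hE hx) ⟨[], e.dropLast, ?_⟩)
  simp [dropLast_append_of_ne_nil he]

theorem Ddot.eq_of_append_eq_append {x y w₂ w₂' : List A} (hx : x ∈ Ddot L)
    (hy : y ∈ Ddot L) (h : x ++ w₂ = y ++ w₂') : x = y ∧ w₂ = w₂' := by
  rcases append_eq_append_iff.mp h with ⟨e, rfl, rfl⟩ | ⟨e, rfl, rfl⟩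
  · obtain rfl := Ddot.eq_nil_of_append_mem hE hFac hx hy
    simp
  · obtain rfl := Ddot.eq_nil_of_append_mem hE hFac hy hx
    simp

/-- Occurrences of factors in `L̈` are not nested: one starting strictly later ends strictly
later. -/
theorem Ddot.exists_overlap {x y d w₂ w₂' : List A} (hx : x ∈ Ddot L) (hy : y ∈ Ddot L)
    (hd : d ≠ []) (h : x ++ w₂ = d ++ y ++ w₂') :
    ∃ e, e ≠ [] ∧ d ++ y = x ++ e ∧ w₂ = e ++ w₂' := by
  have not_infix : ∀ c, x ≠ d ++ y ++ c := by
    rintro c rfl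
    refine hy.1 (hFac y _ hx.2.2 (Ddot.ne_nil_s7 hE hy) ⟨d.tail, c, ?_⟩)
    rw [append_assoc, append_assoc, tail_append_of_ne_nil hd]
  rcases append_eq_append_iff.mp h with ⟨e, he, rfl⟩ | ⟨c, rfl, rfl⟩
  · refine ⟨e, ?_, he, rfl⟩
    rintro rfl
    exact not_infix [] (by simpa using he.symm)
  · exact absurd rfl (not_infix c)

variable (hA : ∀ a : A, [a] ∈ L)
include hA

theorem IsSc.step_eq_step {w₁ w₂ x w₁' w₂' y : List A}
    {s₁ s₂ s₁' s₂' : List (List A)} (hx : x ∈ Ddot L) (hy : y ∈ Ddot L)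
    (h : w₁ ++ x ++ w₂ = w₁' ++ y ++ w₂')
    (hle : w₁.length ≤ w₁'.length)
    (ih : ∀ v : List A, v.length < (w₁ ++ x ++ w₂).length →
      ∀ s s', IsSc L v s → IsSc L v s' → s = s')
    (h₁ : IsSc L (w₁ ++ x.dropLast) s₁) (h₂ : IsSc L (x.tail ++ w₂) s₂)
    (h₁' : IsSc L (w₁' ++ y.dropLast) s₁') (h₂' : IsSc L (y.tail ++ w₂') s₂') :
    s₁ ++ x :: s₂ = s₁' ++ y :: s₂' := by
  have hx0 := length_pos_iff.mpr (Ddot.ne_nil_s7 hE hx)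
  have hy0 := length_pos_iff.mpr (Ddot.ne_nil_s7 hE hy)
  obtain ⟨d, rfl⟩ : w₁ <+: w₁' :=
    prefix_of_prefix_length_le (l₃ := w₁ ++ x ++ w₂) ⟨x ++ w₂, by simp⟩
      ⟨y ++ w₂', by simp [h]⟩ hle
  have hd : x ++ w₂ = d ++ y ++ w₂' := by simpa using h
  rcases eq_or_ne d [] with rfl | hd0
  · obtain ⟨rfl, rfl⟩ := Ddot.eq_of_append_eq_append hE hFac hx hy hd
    rw [ih (w₁ ++ x.dropLast) (by simp; omega) _ _ h₁ (by simpa using h₁'),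
      ih (x.tail ++ w₂) (by simp; omega) _ _ h₂ h₂']
  · obtain ⟨e, he0, hde, rfl⟩ := Ddot.exists_overlap hE hFac hx hy hd0 hd
    -- the word between the two occurrences, read from either side
    have hmid : x.tail ++ e.dropLast = d.tail ++ y.dropLast := by
      have := congrArg (fun l => l.tail.dropLast) hde
      simpa [tail_append_of_ne_nil hd0, tail_append_of_ne_nil (Ddot.ne_nil_s7 hE hx),
        dropLast_append_of_ne_nil he0, dropLast_append_of_ne_nil (Ddot.ne_nil_s7 hE hy)]
        using this.symm
    have hxt : x.tail ≠ [] := fun h => hE (h ▸ hx.2.2)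
    obtain ⟨D, hD⟩ := IsSc.exists hE hA (w := x.tail ++ e.dropLast) (by simp [hxt])
    have hs₂ : s₂ = D ++ y :: s₂' := by
      refine ih (x.tail ++ (e ++ w₂')) (by simp; omega) _ _ h₂ ?_
      have := IsSc.step d.tail w₂' y D s₂' hy (hmid ▸ hD) h₂'
      have hw : d.tail ++ y ++ w₂' = x.tail ++ (e ++ w₂') := by
        have := congrArg List.tail hde
        rw [tail_append_of_ne_nil hd0, tail_append_of_ne_nil (Ddot.ne_nil_s7 hE hx)] at this
        simp [this]
      rwa [hw] at this
    have hs₁' : s₁' = s₁ ++ x :: D := by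
      have hlen := congrArg List.length hde
      simp only [length_append] at hlen
      refine ih (w₁ ++ d ++ y.dropLast) (by simp; omega) _ _ h₁' ?_
      have := IsSc.step w₁ e.dropLast x s₁ D hx h₁ hD
      have hw : w₁ ++ x ++ e.dropLast = w₁ ++ d ++ y.dropLast := by
        have := congrArg List.dropLast hde
        rw [dropLast_append_of_ne_nil he0, dropLast_append_of_ne_nil (Ddot.ne_nil_s7 hE hy)] at this
        simp [this]
      rwa [hw] at this
    simp [hs₂, hs₁']

theorem IsSc.unique_s7 {w : List A} {s s' : List (List A)} (h : IsSc L w s) (h' : IsSc L w s') :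
    s = s' := by
  induction hn : w.length using Nat.strong_induction_on generalizing w s s' with
  | _ n ih =>
  replace ih : ∀ v : List A, v.length < w.length →
      ∀ s s', IsSc L v s → IsSc L v s' → s = s' :=
    fun v hv _ _ h h' => ih _ (hn ▸ hv) h h' rfl
  cases h with
  | base _ hw =>
    cases h' with
    | base => rfl
    | step w₁ w₂ y _ _ hy =>
      exact absurd (hFac y _ hw (Ddot.ne_nil_s7 hE hy) ⟨w₁, w₂, rfl⟩) hy.1
  | step w₁ w₂ x s₁ s₂ hx h₁ h₂ =>
    generalize hw : w₁ ++ x ++ w₂ = w at h'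
    cases h' with
    | base _ hwL => exact absurd (hFac x _ hwL (Ddot.ne_nil_s7 hE hx) ⟨w₁, w₂, hw⟩) hx.1
    | step w₁' w₂' y s₁' s₂' hy h₁' h₂' =>
      rcases le_total w₁.length w₁'.length with hle | hle
      · exact IsSc.step_eq_step hE hFac hA hx hy hw hle ih h₁ h₂ h₁' h₂'
      · exact
          (IsSc.step_eq_step hE hFac hA hy hx hw.symm hle (hw ▸ ih) h₁' h₂' h₁ h₂).symm

end Uniqueness

structure IsFactorialWithLetters (L : Set (List A)) : Prop where
  nil_not_mem : [] ∉ L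
  mem_of_infix : ∀ u w : List A, w ∈ L → u ≠ [] → u <:+: w → u ∈ L
  singleton_mem : ∀ a : A, [a] ∈ L

namespace IsFactorialWithLetters

variable {L : Set (List A)} (hL : IsFactorialWithLetters L)
include hL

theorem ne_nil_of_mem {w : List A} (hw : w ∈ L) : w ≠ [] := by
  rintro rfl; exact hL.nil_not_mem hw

theorem append_not_mem_left {u : List A} (hu : u ∉ insert [] L) (v : List A) :
    u ++ v ∉ insert [] L := by
  simp only [Set.mem_insert_iff, not_or, append_eq_nil_iff] at hu ⊢
  exact ⟨fun h => hu.1 h.1,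
    fun h => hu.2 (hL.mem_of_infix u _ h hu.1 (prefix_append u v).isInfix)⟩

theorem append_not_mem_right (u : List A) {v : List A} (hv : v ∉ insert [] L) :
    u ++ v ∉ insert [] L := by
  simp only [Set.mem_insert_iff, not_or, append_eq_nil_iff] at hv ⊢
  exact ⟨fun h => hv.1 h.2,
    fun h => hv.2 (hL.mem_of_infix v _ h hv.1 (suffix_append u v).isInfix)⟩

theorem isSc_scL {w : List A} (hw : w ≠ []) : IsSc L w (scL L w) := by
  have hex := IsSc.exists hL.nil_not_mem hL.singleton_mem hw
  rw [scL, dif_pos hex]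
  exact hex.choose_spec

theorem scL_eq {w : List A} {s : List (List A)} (h : IsSc L w s) : scL L w = s :=
  (hL.isSc_scL (h.word_ne_nil hL.nil_not_mem)).unique_s7 hL.nil_not_mem hL.mem_of_infix
    hL.singleton_mem h

theorem scL_nil : scL L ([] : List A) = [] := by
  rw [scL, dif_neg]
  rintro ⟨s, hs⟩
  exact hs.word_ne_nil hL.nil_not_mem rfl

theorem scL_of_mem {w : List A} (hw : w ∈ L) : scL L w = [w] :=
  hL.scL_eq (.base w hw)

theorem scL_ne_nil {w : List A} (hw : w ≠ []) : scL L w ≠ [] :=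
  (hL.isSc_scL hw).ne_nil_s7

theorem scL_tail_ne_nil {w : List A} (hw : w ∉ insert [] L) : (scL L w).tail ≠ [] := by
  simp only [Set.mem_insert_iff, not_or] at hw
  exact (hL.isSc_scL hw.1).tail_ne_nil hw.2

theorem scL_append_right (u v : List A) :
    scL L (u ++ v) = scL L (u ++ graveWord L v) ++ (scL L v).tail := by
  rcases eq_or_ne v [] with rfl | hv
  · simp only [graveWord, hL.scL_nil, headI_nil, tail_nil, append_nil]
    exact congrArg _ (append_nil u).symm
  have hs := hL.isSc_scL hv
  have hne : u ++ graveWord L v ≠ [] :=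
    fun h => hL.ne_nil_of_mem hs.headI_mem (append_eq_nil_iff.mp h).2
  exact hL.scL_eq (hs.append_right (hL.isSc_scL hne))

theorem scL_append_left (u v : List A) :
    scL L (u ++ v) = (scL L u).dropLast ++ scL L (acuteWord L u ++ v) := by
  rcases eq_or_ne u [] with rfl | hu
  · simp [acuteWord, hL.scL_nil]
  have hs := hL.isSc_scL hu
  have hne : acuteWord L u ++ v ≠ [] :=
    fun h => hL.ne_nil_of_mem hs.getLastD_mem (append_eq_nil_iff.mp h).1
  exact hL.scL_eq (hs.append_left (hL.isSc_scL hne))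

end IsFactorialWithLetters

/-- `f(ẅ₁) f(w₁) ⋯ f(ẅ_m)`, the group part of `f̌(w)` when `w ∉ L¹`. -/
noncomputable def interiorG [Group G] (L : Set (List A)) (f : List A → G) (w : List A) : G :=
  ((scL L w).tail.dropLast.map f).prod

namespace IsFactorialWithLetters

variable {L : Set (List A)} (hL : IsFactorialWithLetters L)
include hL

theorem graveWord_mem (w : List A) : graveWord L w ∈ insert [] L := by
  rcases eq_or_ne w [] with rfl | hw
  · simp only [graveWord, hL.scL_nil, headI_nil]
    exact Set.mem_insert _ _
  · exact Set.mem_insert_of_mem _ (hL.isSc_scL hw).headI_mem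

theorem acuteWord_mem (w : List A) : acuteWord L w ∈ insert [] L := by
  rcases eq_or_ne w [] with rfl | hw
  · simp only [acuteWord, hL.scL_nil, getLastD_nil]
    exact Set.mem_insert _ _
  · exact Set.mem_insert_of_mem _ (hL.isSc_scL hw).getLastD_mem

theorem graveWord_ne_nil {w : List A} (hw : w ≠ []) : graveWord L w ≠ [] :=
  hL.ne_nil_of_mem (hL.isSc_scL hw).headI_mem

theorem acuteWord_ne_nil {w : List A} (hw : w ≠ []) : acuteWord L w ≠ [] :=
  hL.ne_nil_of_mem (hL.isSc_scL hw).getLastD_mem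

theorem graveWord_eq_self {x : List A} (hx : x ∈ insert [] L) : graveWord L x = x := by
  rcases hx with rfl | hx
  · rw [graveWord, hL.scL_nil]; rfl
  · rw [graveWord, hL.scL_of_mem hx]; rfl

theorem acuteWord_eq_self {x : List A} (hx : x ∈ insert [] L) : acuteWord L x = x := by
  rcases hx with rfl | hx
  · rw [acuteWord, hL.scL_nil]; rfl
  · rw [acuteWord, hL.scL_of_mem hx]; rfl

variable [Group G] (f : List A → G)

theorem graveG_eq_one {x : List A} (hx : x ∈ insert [] L) : graveG L f x = 1 := by
  rcases hx with rfl | hx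
  · rw [graveG, hL.scL_nil]; rfl
  · rw [graveG, hL.scL_of_mem hx]; rfl

theorem acuteG_eq_one {x : List A} (hx : x ∈ insert [] L) : acuteG L f x = 1 := by
  rcases hx with rfl | hx
  · rw [acuteG, hL.scL_nil]; rfl
  · rw [acuteG, hL.scL_of_mem hx]; rfl

theorem fhat_nil : fhat L f [] = 1 := by
  rw [fhat, hL.scL_nil]; rfl

theorem graveWord_append_right (u v : List A) :
    graveWord L (u ++ v) = graveWord L (u ++ graveWord L v) := by
  rcases eq_or_ne v [] with rfl | hv
  · rw [hL.graveWord_eq_self (Set.mem_insert _ _)]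
  rw [graveWord, hL.scL_append_right,
    headI_append_of_ne_nil _ (hL.scL_ne_nil (by simp [hL.graveWord_ne_nil hv]))]
  rfl

theorem graveG_append_right (u v : List A) :
    graveG L f (u ++ v) = graveG L f (u ++ graveWord L v) * graveG L f v := by
  rcases eq_or_ne v [] with rfl | hv
  · rw [hL.graveWord_eq_self (Set.mem_insert _ _), hL.graveG_eq_one f (Set.mem_insert _ _),
      mul_one]
  rw [graveG, hL.scL_append_right,
    tail_append_of_ne_nil (hL.scL_ne_nil (by simp [hL.graveWord_ne_nil hv])), map_append,
    prod_append]
  rfl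

theorem fhat_append_right (u v : List A) :
    fhat L f (u ++ v) = fhat L f (u ++ graveWord L v) * graveG L f v := by
  rw [fhat, hL.scL_append_right, map_append, prod_append]
  rfl

theorem interiorG_append_right (u : List A) {v : List A} (hv : v ∉ insert [] L) :
    interiorG L f (u ++ v) = graveG L f (u ++ graveWord L v) * interiorG L f v := by
  have hv' : v ≠ [] := fun h => hv (h ▸ Set.mem_insert _ _)
  rw [interiorG, hL.scL_append_right,
    tail_append_of_ne_nil (hL.scL_ne_nil (by simp [hL.graveWord_ne_nil hv'])),
    dropLast_append_of_ne_nil (hL.scL_tail_ne_nil hv), map_append, prod_append]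
  rfl

theorem acuteWord_append_right (u : List A) {v : List A} (hv : v ∉ insert [] L) :
    acuteWord L (u ++ v) = acuteWord L v := by
  rw [acuteWord, hL.scL_append_right, getLastD_append_of_ne_nil _ (hL.scL_tail_ne_nil hv),
    getLastD_tail (hL.scL_tail_ne_nil hv)]
  rfl

theorem acuteG_append_right (u : List A) {v : List A} (hv : v ∉ insert [] L) :
    acuteG L f (u ++ v) = fhat L f (u ++ graveWord L v) * interiorG L f v := by
  rw [acuteG, hL.scL_append_right, dropLast_append_of_ne_nil (hL.scL_tail_ne_nil hv),
    map_append, prod_append]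
  rfl

theorem acuteWord_append_left (u v : List A) :
    acuteWord L (u ++ v) = acuteWord L (acuteWord L u ++ v) := by
  rcases eq_or_ne u [] with rfl | hu
  · rw [hL.acuteWord_eq_self (Set.mem_insert _ _)]
  rw [acuteWord, hL.scL_append_left,
    getLastD_append_of_ne_nil _ (hL.scL_ne_nil (by simp [hL.acuteWord_ne_nil hu]))]
  rfl

theorem acuteG_append_left (u v : List A) :
    acuteG L f (u ++ v) = acuteG L f u * acuteG L f (acuteWord L u ++ v) := by
  rcases eq_or_ne u [] with rfl | hu
  · rw [hL.acuteWord_eq_self (Set.mem_insert _ _), hL.acuteG_eq_one f (Set.mem_insert _ _),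
      one_mul]
  rw [acuteG, hL.scL_append_left,
    dropLast_append_of_ne_nil (hL.scL_ne_nil (by simp [hL.acuteWord_ne_nil hu])), map_append,
    prod_append]
  rfl

theorem fhat_append_left (u v : List A) :
    fhat L f (u ++ v) = acuteG L f u * fhat L f (acuteWord L u ++ v) := by
  rw [fhat, hL.scL_append_left, map_append, prod_append]
  rfl

theorem interiorG_append_left {u : List A} (hu : u ∉ insert [] L) (v : List A) :
    interiorG L f (u ++ v) = interiorG L f u * acuteG L f (acuteWord L u ++ v) := by
  have hu' : u ≠ [] := fun h => hu (h ▸ Set.mem_insert _ _)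
  rw [interiorG, hL.scL_append_left,
    tail_append_of_ne_nil (dropLast_ne_nil_of_tail_ne_nil (hL.scL_tail_ne_nil hu)),
    dropLast_append_of_ne_nil (hL.scL_ne_nil (by simp [hL.acuteWord_ne_nil hu'])),
    map_append, prod_append, tail_dropLast]
  rfl

theorem graveWord_append_left {u : List A} (hu : u ∉ insert [] L) (v : List A) :
    graveWord L (u ++ v) = graveWord L u := by
  rw [graveWord, hL.scL_append_left,
    headI_append_of_ne_nil _ (dropLast_ne_nil_of_tail_ne_nil (hL.scL_tail_ne_nil hu)),
    headI_dropLast (hL.scL_tail_ne_nil hu)]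
  rfl

theorem graveG_append_left {u : List A} (hu : u ∉ insert [] L) (v : List A) :
    graveG L f (u ++ v) = interiorG L f u * fhat L f (acuteWord L u ++ v) := by
  rw [graveG, hL.scL_append_left,
    tail_append_of_ne_nil (dropLast_ne_nil_of_tail_ne_nil (hL.scL_tail_ne_nil hu)),
    map_append, prod_append, tail_dropLast]
  rfl

end IsFactorialWithLetters

theorem takeA_append_dropA (w : List (A ⊕ A_G)) : (takeA w).map .inl ++ dropA w = w := by
  induction w with
  | nil => rfl
  | cons x w ih => cases x <;> simp [takeA, dropA, ih]

theorem takeG_append_dropG (w : List (A ⊕ A_G)) : (takeG w).map .inr ++ dropG w = w := by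
  induction w with
  | nil => rfl
  | cons x w ih => cases x <;> simp [takeG, dropG, ih]

theorem dropA_eq_nil_or_inr_cons (w : List (A ⊕ A_G)) :
    dropA w = [] ∨ ∃ b t, dropA w = .inr b :: t := by
  induction w with
  | nil => exact .inl rfl
  | cons x w ih =>
    cases x with
    | inl a => exact ih
    | inr b => exact .inr ⟨b, w, rfl⟩

theorem length_dropA_dropG_lt {w : List (A ⊕ A_G)} (hw : w ≠ []) :
    (dropA (dropG w)).length < w.length := by
  have hA : ∀ v : List (A ⊕ A_G), (dropA v).length ≤ v.length := fun v => by
    have := congrArg length (takeA_append_dropA v)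
    simp only [length_append, length_map] at this
    omega
  have hG : ∀ v : List (A ⊕ A_G), (dropG v).length ≤ v.length := fun v => by
    have := congrArg length (takeG_append_dropG v)
    simp only [length_append, length_map] at this
    omega
  obtain ⟨x, r, rfl⟩ := exists_cons_of_ne_nil hw
  cases x with
  | inl a => exact Nat.lt_succ_of_le (hA r)
  | inr b => exact Nat.lt_succ_of_le ((hA _).trans (hG r))

/-- `word u` stands for a word `u` over `A`; `mixed p g q` for a word containing letters of
`A_G`, with first and last `A`-blocks `p` and `q` and everything in between evaluated to `g`.
In a product, `F` evaluates the `A`-block formed where two mixed words meet. -/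
inductive Profile (A G : Type*) where
  | word (u : List A)
  | mixed (p : List A) (g : G) (q : List A)

namespace Profile

def mul [Mul G] (F : List A → G) : Profile A G → Profile A G → Profile A G
  | word u, word v => word (u ++ v)
  | word u, mixed p g q => mixed (u ++ p) g q
  | mixed p g q, word v => mixed p g (q ++ v)
  | mixed p g q, mixed p' g' q' => mixed p (g * F (q ++ p') * g') q'

theorem mul_assoc [Semigroup G] (F : List A → G) (s t r : Profile A G) :
    (s.mul F t).mul F r = s.mul F (t.mul F r) := by
  cases s <;> cases t <;> cases r <;> simp [mul, _root_.mul_assoc]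

@[simp] theorem word_nil_mul [Mul G] (F : List A → G) (s : Profile A G) :
    (word []).mul F s = s := by
  cases s <;> rfl

@[simp] theorem mul_word_nil [Mul G] (F : List A → G) (s : Profile A G) :
    s.mul F (word []) = s := by
  cases s <;> simp [mul]

def ofWord [Mul G] (F : List A → G) (evA : A_G → G) : List (A ⊕ A_G) → Profile A G
  | [] => word []
  | .inl a :: w => (word [a]).mul F (ofWord F evA w)
  | .inr b :: w => (mixed [] (evA b) []).mul F (ofWord F evA w)

def toWord (rep : G → List A_G) : Profile A G → List (A ⊕ A_G)
  | word u => u.map .inl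
  | mixed p g q => p.map .inl ++ (rep g).map .inr ++ q.map .inl

theorem ofWord_append [Semigroup G] (F : List A → G) (evA : A_G → G)
    (w z : List (A ⊕ A_G)) :
    ofWord F evA (w ++ z) = (ofWord F evA w).mul F (ofWord F evA z) := by
  induction w with
  | nil => simp [ofWord]
  | cons x w ih => cases x <;> simp [ofWord, ih, mul_assoc]

theorem ofWord_map_inl [Mul G] (F : List A → G) (evA : A_G → G) (u : List A) :
    ofWord F evA (u.map .inl) = word u := by
  induction u with
  | nil => rfl
  | cons a u ih => simp [ofWord, ih, mul]

theorem exists_ofWord_inr_cons [Mul G] (F : List A → G) (evA : A_G → G) (b : A_G)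
    (w : List (A ⊕ A_G)) : ∃ g q, ofWord F evA (.inr b :: w) = mixed [] g q := by
  cases h : ofWord F evA w <;> simp [ofWord, h, mul]

section Group

variable [Group G] (F : List A → G) (evA : A_G → G)

theorem ofWord_map_inr (hF : F [] = 1) {g : List A_G} (hg : g ≠ []) :
    ofWord F evA (g.map .inr) = mixed [] (evalW evA g) [] := by
  induction g with
  | nil => exact absurd rfl hg
  | cons b g ih =>
    rcases eq_or_ne g [] with rfl | hg'
    · simp [ofWord, evalW]
    · simp [ofWord, ih hg', mul, hF, evalW]

theorem ofWord_toWord (hF : F [] = 1) {rep : G → List A_G} (hrepne : ∀ g, rep g ≠ [])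
    (hrep : ∀ g, evalW evA (rep g) = g) (s : Profile A G) : ofWord F evA (s.toWord rep) = s := by
  cases s with
  | word u => exact ofWord_map_inl F evA u
  | mixed p g q =>
    simp [toWord, ofWord_append, ofWord_map_inl, ofWord_map_inr F evA hF (hrepne g), hrep, mul]

end Group

section Normalize

variable [Group G]

/-- `f̌` read on profiles, `insert [] L` playing the role of `L¹`. -/
noncomputable def normalize (L : Set (List A)) (f : List A → G) : Profile A G → Profile A G
  | word u =>
    open Classical in
    if u ∈ insert [] L then word u
    else mixed (graveWord L u) (interiorG L f u) (acuteWord L u)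
  | mixed p g q => mixed (graveWord L p) (graveG L f p * g * acuteG L f q) (acuteWord L q)

/-- What `midRunAux` computes from the profile of its argument. -/
noncomputable def acutePart (L : Set (List A)) (f : List A → G) : Profile A G → G × List A
  | word u => (acuteG L f u, acuteWord L u)
  | mixed p g q => (fhat L f p * g * acuteG L f q, acuteWord L q)

variable {L : Set (List A)} (f : List A → G) (evA : A_G → G) (rep : G → List A_G)

theorem normalize_word_of_mem {u : List A} (hu : u ∈ insert [] L) :
    normalize L f (word u) = word u :=
  if_pos hu

theorem normalize_word_of_not_mem {u : List A} (hu : u ∉ insert [] L) :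
    normalize L f (word u) = mixed (graveWord L u) (interiorG L f u) (acuteWord L u) :=
  if_neg hu

@[simp] theorem normalize_mixed (p : List A) (g : G) (q : List A) :
    normalize L f (mixed p g q) =
      mixed (graveWord L p) (graveG L f p * g * acuteG L f q) (acuteWord L q) :=
  rfl

variable (hL : IsFactorialWithLetters L)
include hL

theorem normalize_mul_normalize_right (s t : Profile A G) :
    normalize L f (s.mul (fhat L f) (normalize L f t)) = normalize L f (s.mul (fhat L f) t) := by
  rcases t with v | ⟨p', g', q'⟩
  · by_cases hv : v ∈ insert [] L
    · rw [normalize_word_of_mem f hv]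
    rw [normalize_word_of_not_mem f hv]
    rcases s with u | ⟨p, g, q⟩
    · simp [mul, normalize_word_of_not_mem f (hL.append_not_mem_right u hv),
        hL.graveWord_append_right u v, hL.interiorG_append_right f u hv,
        hL.acuteWord_append_right u hv, hL.acuteG_eq_one f (hL.acuteWord_mem v),
        hL.acuteWord_eq_self (hL.acuteWord_mem v)]
    · simp [mul, hL.acuteG_append_right f q hv, hL.acuteWord_append_right q hv,
        hL.acuteG_eq_one f (hL.acuteWord_mem v), hL.acuteWord_eq_self (hL.acuteWord_mem v),
        _root_.mul_assoc]
  · rcases s with u | ⟨p, g, q⟩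
    · simp [mul, hL.graveWord_append_right u p', hL.graveG_append_right f u p',
        hL.acuteG_eq_one f (hL.acuteWord_mem q'), hL.acuteWord_eq_self (hL.acuteWord_mem q'),
        _root_.mul_assoc]
    · simp [mul, hL.fhat_append_right f q p', hL.acuteG_eq_one f (hL.acuteWord_mem q'),
        hL.acuteWord_eq_self (hL.acuteWord_mem q'), _root_.mul_assoc]

theorem normalize_mul_normalize_left (s t : Profile A G) :
    normalize L f ((normalize L f s).mul (fhat L f) t) = normalize L f (s.mul (fhat L f) t) := by
  rcases s with u | ⟨p, g, q⟩
  · by_cases hu : u ∈ insert [] L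
    · rw [normalize_word_of_mem f hu]
    rw [normalize_word_of_not_mem f hu]
    rcases t with v | ⟨p', g', q'⟩
    · simp [mul, normalize_word_of_not_mem f (hL.append_not_mem_left hu v),
        hL.graveWord_append_left hu v, hL.interiorG_append_left f hu v,
        hL.acuteWord_append_left u v, hL.graveG_eq_one f (hL.graveWord_mem u),
        hL.graveWord_eq_self (hL.graveWord_mem u)]
    · simp [mul, hL.graveWord_append_left hu p', hL.graveG_append_left f hu p',
        hL.graveG_eq_one f (hL.graveWord_mem u), hL.graveWord_eq_self (hL.graveWord_mem u),
        _root_.mul_assoc]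
  · rcases t with v | ⟨p', g', q'⟩
    · simp [mul, hL.acuteG_append_left f q v, hL.acuteWord_append_left q v,
        hL.graveG_eq_one f (hL.graveWord_mem p), hL.graveWord_eq_self (hL.graveWord_mem p),
        _root_.mul_assoc]
    · simp [mul, hL.fhat_append_left f q p', hL.graveG_eq_one f (hL.graveWord_mem p),
        hL.graveWord_eq_self (hL.graveWord_mem p), _root_.mul_assoc]

theorem normalize_mul (s t : Profile A G) :
    normalize L f (s.mul (fhat L f) t) =
      normalize L f ((normalize L f s).mul (fhat L f) (normalize L f t)) := by
  rw [normalize_mul_normalize_left f hL, normalize_mul_normalize_right f hL]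

theorem normalize_normalize (s : Profile A G) :
    normalize L f (normalize L f s) = normalize L f s := by
  simpa [normalize_word_of_mem f (Set.mem_insert [] L)] using
    (normalize_mul f hL s (word [])).symm

theorem acutePart_mixed_nil_mul (g : G) (s : Profile A G) :
    acutePart L f ((mixed [] g []).mul (fhat L f) s) =
      (g * (acutePart L f s).1, (acutePart L f s).2) := by
  cases s <;> simp [mul, acutePart, hL.fhat_nil, _root_.mul_assoc]

theorem acutePart_ofWord_map_inr_append (g : List A_G) (w : List (A ⊕ A_G)) :
    acutePart L f (ofWord (fhat L f) evA (g.map .inr ++ w)) =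
      (evalW evA g * (acutePart L f (ofWord (fhat L f) evA w)).1,
        (acutePart L f (ofWord (fhat L f) evA w)).2) := by
  induction g with
  | nil => simp [evalW]
  | cons b g ih => simp [ofWord, acutePart_mixed_nil_mul f hL, ih, evalW, _root_.mul_assoc]

theorem midRunAux_eq_acutePart {n : ℕ} {w : List (A ⊕ A_G)} (hn : w.length ≤ n) :
    midRunAux L f evA n w = acutePart L f (ofWord (fhat L f) evA w) := by
  induction n generalizing w with
  | zero =>
    obtain rfl : w = [] := eq_nil_of_length_eq_zero (by omega)
    simp [midRunAux, ofWord, acutePart, hL.acuteG_eq_one f (Set.mem_insert [] L),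
      hL.acuteWord_eq_self (Set.mem_insert [] L)]
  | succ n ih =>
    have hw : w = (takeG w).map .inr ++ ((takeA (dropG w)).map .inl ++ dropA (dropG w)) := by
      rw [takeA_append_dropA, takeG_append_dropG]
    rcases dropA_eq_nil_or_inr_cons (dropG w) with h | ⟨b, t, h⟩
    · simp only [midRunAux, h]
      conv_rhs => rw [hw, h, append_nil, acutePart_ofWord_map_inr_append f evA hL,
        ofWord_map_inl]
      rfl
    · have hlt : (Sum.inr b :: t : List (A ⊕ A_G)).length ≤ n := by
        have := length_dropA_dropG_lt (w := w) (by rintro rfl; simp [dropG, dropA] at h)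
        rw [h] at this
        omega
      obtain ⟨g, q, hgq⟩ := exists_ofWord_inr_cons (fhat L f) evA b t
      simp only [midRunAux, h, ih hlt]
      conv_rhs => rw [hw, h, acutePart_ofWord_map_inr_append f evA hL, ofWord_append,
        ofWord_map_inl]
      simp [hgq, acutePart, mul, hL.fhat_nil, _root_.mul_assoc]

theorem toWord_normalize_word (u : List A) :
    (normalize L f (word u)).toWord rep = checkOfSeq f rep (scL L u) := by
  by_cases hu : u ∈ insert [] L
  · rw [normalize_word_of_mem f hu]
    rcases hu with rfl | hu
    · rw [hL.scL_nil]; rfl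
    · rw [hL.scL_of_mem hu]; rfl
  · rw [normalize_word_of_not_mem f hu]
    obtain ⟨x, r, hs⟩ :=
      exists_cons_of_ne_nil (hL.scL_ne_nil (w := u) (by rintro rfl; simp at hu))
    have htail := hL.scL_tail_ne_nil hu
    rw [hs, tail_cons] at htail
    obtain ⟨y, r, rfl⟩ := exists_cons_of_ne_nil htail
    simp [toWord, checkOfSeq, graveWord, interiorG, acuteWord, hs]

end Normalize

end Profile

open Profile in
theorem fcheckX_eq_toWord_normalize_ofWord [Group G] {L : Set (List A)}
    (hL : IsFactorialWithLetters L) (f : List A → G) (evA : A_G → G) (rep : G → List A_G)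
    (w : List (A ⊕ A_G)) :
    fcheckX L f evA rep w = (normalize L f (ofWord (fhat L f) evA w)).toWord rep := by
  rcases dropA_eq_nil_or_inr_cons w with h | ⟨b, t, h⟩
  · have hw : w = (takeA w).map .inl := by simpa [h] using (takeA_append_dropA w).symm
    simp only [fcheckX, h]
    conv_rhs => rw [hw, ofWord_map_inl]
    exact (toWord_normalize_word f rep hL _).symm
  · obtain ⟨g, q, hgq⟩ := exists_ofWord_inr_cons (fhat L f) evA b t
    have hw : w = (takeA w).map .inl ++ (.inr b :: t) := by rw [← h, takeA_append_dropA]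
    simp only [fcheckX, h, midRunAux_eq_acutePart f evA hL (le_refl _), hgq]
    conv_rhs => rw [hw, ofWord_append, ofWord_map_inl, hgq]
    simp [mul, acutePart, toWord, hL.fhat_nil, _root_.mul_assoc]

theorem fcheckX_append_general [Group G]
    (L : Set (List A)) (hE : [] ∉ L)
    (hFac : ∀ u w : List A, w ∈ L → u ≠ [] → u <:+: w → u ∈ L)
    (hA : ∀ a : A, [a] ∈ L)
    (f : List A → G) (evA : A_G → G) (rep : G → List A_G)
    (hrepne : ∀ g : G, rep g ≠ [])
    (hrep : ∀ g : G, evalW evA (rep g) = g)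
    (w z : List (A ⊕ A_G)) :
    fcheckX L f evA rep (w ++ z) =
      fcheckX L f evA rep (fcheckX L f evA rep w ++ fcheckX L f evA rep z) ∧
    fcheckX L f evA rep (fcheckX L f evA rep w) = fcheckX L f evA rep w := by
  have hL : IsFactorialWithLetters L := ⟨hE, hFac, hA⟩
  simp only [fcheckX_eq_toWord_normalize_ofWord hL, Profile.ofWord_append,
    Profile.ofWord_toWord _ evA (hL.fhat_nil f) hrepne hrep]
  exact ⟨congrArg _ (Profile.normalize_mul f hL _ _),
    congrArg _ (Profile.normalize_normalize f hL _)⟩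

/-- equation (5). For all words `w, z ∈ X⁺` over
`X = A ⊕ A_G`, `f̌(wz) = f̌(f̌(w) f̌(z))`; in particular `f̌ ∘ f̌ = f̌`. -/
theorem fcheckX_append [Nonempty A] [Group G]
    (L : Set (List A)) (hE : [] ∉ L)
    (hFac : ∀ u w : List A, w ∈ L → u ≠ [] → u <:+: w → u ∈ L)
    (hA : ∀ a : A, [a] ∈ L)
    (f : List A → G) (evA : A_G → G) (rep : G → List A_G)
    (hrepne : ∀ g : G, rep g ≠ [])
    (hrep : ∀ g : G, evalW evA (rep g) = g)
    (w z : List (A ⊕ A_G)) (hw : w ≠ []) (hz : z ≠ []) :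
    fcheckX L f evA rep (w ++ z) =
      fcheckX L f evA rep (fcheckX L f evA rep w ++ fcheckX L f evA rep z) ∧
    fcheckX L f evA rep (fcheckX L f evA rep w) = fcheckX L f evA rep w :=
  fcheckX_append_general L hE hFac hA f evA rep hrepne hrep w z
end
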